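/- Deformation determinant formula (multiplicative Poincaré–Hopf): let G be a finite abstract simplicial complex, let x ∈ G be a facet (maximal with respect to inclusion), let H = G \ {x}, and let L be the connection matrix of H. For a real parameter t, let K(t) be the matrix indexed by G with K(t)(y,z) = L(y,z) for y, z ∈ H, K(t)(x,x) = 1, and K(t)(y,x) = K(t)(x,y) = t if y ∈ H intersects x and 0 otherwise. Then det(K(t)) = (1 - t²·χ(A))·det(L), where A = { y ∈ G : ∅ ≠ y ⊊ x } is the boundary complex of x. In particular, det(K(1)) = ω(x)·det(L). -/

import Mathlib

open Finset BigOperators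

variable {α : Type*} [DecidableEq α]

/-- A finite abstract simplicial complex: a finite collection of nonempty finite
sets closed under taking nonempty subsets. -/
def IsComplex (G : Finset (Finset α)) : Prop :=
  (∀ x ∈ G, x.Nonempty) ∧ ∀ x ∈ G, ∀ y : Finset α, y.Nonempty → y ⊆ x → y ∈ G

/-- ω(x) = (-1)^(|x|-1). -/
def omegaS (x : Finset α) : ℤ := (-1) ^ (x.card - 1)

/-- Euler characteristic of any finite collection of finite sets. -/
def chi (G : Finset (Finset α)) : ℤ := ∑ x ∈ G, omegaS x

/-- The connection matrix over ℝ: L(y,z)=1 if y and z intersect, 0 otherwise. -/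
def connL (G : Finset (Finset α)) : Matrix G G ℝ :=
  fun y z => if (y.1 ∩ z.1).Nonempty then 1 else 0

/-- The deformed connection matrix K(t) of G = H ∪ {x}: it agrees with the
connection matrix of H = G \ {x} away from x, has K(t)(x,x) = 1, and the row
and column of x carry the connection entries multiplied by t. -/
def deformK (G : Finset (Finset α)) (x : Finset α) (t : ℝ) : Matrix G G ℝ :=
  fun y z =>
    if y.1 = x then
      (if z.1 = x then 1 else if (y.1 ∩ z.1).Nonempty then t else 0)
    else if z.1 = x then
      (if (y.1 ∩ z.1).Nonempty then t else 0)
    else if (y.1 ∩ z.1).Nonempty then 1 else 0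

/-
Write `L = L(H)` and `b` for the indicator vector of the simplices of `H` meeting `x`, so that
`K(t) = [[1, t bᵀ], [t b, L]]`. Without inverting `L`, `b` is a combination of the rows of `L`:
with `v(a) = -ω(x) ω(a)` on the proper faces `a` of `x`, `(vᵀ L)(z) = b(z)`, because the faces of
`x` meeting a simplex `z ⊉ x` have total weight `∑ ω = 0` (inclusion–exclusion; maximality of `x`
guarantees `z ⊉ x` for every `z ∈ H`). Subtracting `t·v` of the `H`-rows from the `x`-row clears
it except for the corner entry, so `det K(t) = (1 - t² v·b) det L`, and
`v·b = -ω(x) χ(A) = -ω(x) (1 - ω(x)) = 1 - ω(x) = χ(A)`.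
-/

open Matrix

theorem Matrix.det_fromBlocks_replicate_of_vecMul_eq {n R : Type*} [Fintype n] [DecidableEq n]
    [CommRing R] (a : R) (u w v : n → R) (L : Matrix n n R) (hv : v ᵥ* L = u) :
    (fromBlocks (of fun _ _ : Unit => a) (replicateRow Unit u) (replicateCol Unit w) L).det
      = (a - v ⬝ᵥ w) * L.det := by
  set P : Matrix (Unit ⊕ n) (Unit ⊕ n) R := fromBlocks 1 (-replicateRow Unit v) 0 1
  have hP : P.det = 1 := by simp [P]
  have hPM : P * fromBlocks (of fun _ _ : Unit => a) (replicateRow Unit u) (replicateCol Unit w) L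
      = fromBlocks (of fun _ _ : Unit => a - v ⬝ᵥ w) 0 (replicateCol Unit w) L := by
    rw [fromBlocks_multiply, Matrix.neg_mul, Matrix.neg_mul, replicateRow_mul_replicateCol,
      ← replicateRow_vecMul, hv]
    congr 1 <;> ext <;> simp [sub_eq_add_neg]
  rw [← one_mul (det _), ← hP, ← det_mul, hPM, det_fromBlocks_zero₁₂, det_unique]
  rfl

def Finset.equivUnitSumErase {β : Type*} [DecidableEq β] (s : Finset β) {a : β} (ha : a ∈ s) :
    s ≃ Unit ⊕ s.erase a where
  toFun y := if h : y.1 = a then Sum.inl () else Sum.inr ⟨y.1, mem_erase.2 ⟨h, y.2⟩⟩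
  invFun := Sum.elim (fun _ => ⟨a, ha⟩) (fun z => ⟨z.1, mem_of_mem_erase z.2⟩)
  left_inv y := by
    by_cases h : y.1 = a
    · simp only [h, dif_pos]
      exact Subtype.ext h.symm
    · simp [h]
  right_inv s := by
    rcases s with _ | z
    · simp
    · simp [(mem_erase.1 z.2).1]

omit [DecidableEq α] in
theorem omegaS_of_nonempty {a : Finset α} (ha : a.Nonempty) : omegaS a = -(-1) ^ #a := by
  obtain ⟨k, hk⟩ := Nat.exists_eq_add_one_of_ne_zero ha.card_pos.ne'
  simp [omegaS, hk, pow_succ]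

omit [DecidableEq α] in
theorem omegaS_mul_self (a : Finset α) : omegaS a * omegaS a = 1 := by
  simp [omegaS, ← mul_pow]

theorem powerset_filter_not_inter_nonempty (x z : Finset α) :
    x.powerset.filter (fun a => ¬ (a ∩ z).Nonempty) = (x \ z).powerset := by
  ext a
  simp [subset_sdiff, not_nonempty_iff_eq_empty, disjoint_iff_inter_eq_empty]

theorem sum_powerset_filter_inter_nonempty_omegaS (x z : Finset α) :
    ∑ a ∈ x.powerset with (a ∩ z).Nonempty, omegaS a = if x.Nonempty ∧ x ⊆ z then 1 else 0 := by
  have hsign : ∑ a ∈ x.powerset with (a ∩ z).Nonempty, omegaS a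
      = -∑ a ∈ x.powerset with (a ∩ z).Nonempty, (-1) ^ #a := by
    rw [← sum_neg_distrib]
    exact sum_congr rfl fun a ha =>
      omegaS_of_nonempty ((mem_filter.1 ha).2.mono inter_subset_left)
  have hsplit := sum_filter_add_sum_filter_not x.powerset (fun a => (a ∩ z).Nonempty)
    (fun a => (-1 : ℤ) ^ #a)
  rw [powerset_filter_not_inter_nonempty, sum_powerset_neg_one_pow_card,
    sum_powerset_neg_one_pow_card] at hsplit
  simp only [sdiff_eq_empty_iff_subset] at hsplit
  rw [hsign]
  generalize ∑ a ∈ x.powerset with (a ∩ z).Nonempty, (-1 : ℤ) ^ #a = S at hsplit ⊢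
  by_cases hx : x = ∅
  · simp_all
  · simp_all [nonempty_iff_ne_empty]
    linarith

def boundary (x : Finset α) : Finset (Finset α) :=
  x.powerset.filter (fun y => y.Nonempty ∧ y ≠ x)

theorem boundary_filter_inter_nonempty (x z : Finset α) :
    (boundary x).filter (fun a => (a ∩ z).Nonempty)
      = (x.powerset.filter (fun a => (a ∩ z).Nonempty)).erase x := by
  ext a
  simp only [boundary, mem_filter, mem_erase, mem_powerset]
  constructor
  · rintro ⟨⟨hax, -, hne⟩, haz⟩
    exact ⟨hne, hax, haz⟩
  · rintro ⟨hne, hax, haz⟩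
    exact ⟨⟨hax, haz.mono inter_subset_left, hne⟩, haz⟩

theorem sum_boundary_filter_inter_nonempty_omegaS (x z : Finset α) :
    ∑ a ∈ boundary x with (a ∩ z).Nonempty, omegaS a
      = (if x.Nonempty ∧ x ⊆ z then 1 else 0) - if (x ∩ z).Nonempty then omegaS x else 0 := by
  rw [boundary_filter_inter_nonempty, ← sum_powerset_filter_inter_nonempty_omegaS]
  split_ifs with hxz
  · rw [sum_erase_eq_sub (by simpa using hxz)]
  · rw [erase_eq_of_notMem (by simpa using hxz), sub_zero]

theorem chi_boundary {x : Finset α} (hx : x.Nonempty) : chi (boundary x) = 1 - omegaS x := by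
  have h := sum_boundary_filter_inter_nonempty_omegaS x x
  rw [filter_true_of_mem fun a ha => ?_] at h
  · simpa [chi, hx] using h
  · obtain ⟨hax, hne, -⟩ := by simpa [boundary] using ha
    rwa [inter_eq_left.2 hax]

theorem sum_boundary_omegaS_mul_ite (x z : Finset α) :
    ∑ a ∈ boundary x, (omegaS a : ℝ) * (if (a ∩ z).Nonempty then 1 else 0)
      = (if x.Nonempty ∧ x ⊆ z then 1 else 0) - if (x ∩ z).Nonempty then (omegaS x : ℝ) else 0 := by
  simp only [mul_ite, mul_one, mul_zero]
  rw [← sum_filter]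
  exact_mod_cast sum_boundary_filter_inter_nonempty_omegaS x z

def connVec (H : Finset (Finset α)) (x : Finset α) : H → ℝ :=
  fun z => if (x ∩ z.1).Nonempty then 1 else 0

theorem deformK_submatrix_equivUnitSumErase {G : Finset (Finset α)} {x : Finset α} (hx : x ∈ G)
    (t : ℝ) :
    (deformK G x t).submatrix (G.equivUnitSumErase hx).symm (G.equivUnitSumErase hx).symm
      = fromBlocks (of fun _ _ => 1) (replicateRow Unit (t • connVec (G.erase x) x))
          (replicateCol Unit (t • connVec (G.erase x) x)) (connL (G.erase x)) := by
  ext (_ | ⟨y, hy⟩) (_ | ⟨z, hz⟩)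
  · simp [deformK, Finset.equivUnitSumErase]
  · simp [deformK, connVec, Finset.equivUnitSumErase, (mem_erase.1 hz).1]
    rfl
  · simp [deformK, connVec, Finset.equivUnitSumErase, (mem_erase.1 hy).1, inter_comm]
  · simp [deformK, connL, Finset.equivUnitSumErase, (mem_erase.1 hy).1, (mem_erase.1 hz).1]
    rfl

theorem sum_erase_ite_subset_eq_sum_boundary {G : Finset (Finset α)} (hG : IsComplex G)
    {x : Finset α} (hx : x ∈ G) (f : Finset α → ℝ) :
    ∑ a : G.erase x, (if a.1 ⊆ x then f a.1 else 0) = ∑ a ∈ boundary x, f a := by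
  have hfilter : (G.erase x).filter (· ⊆ x) = boundary x := by
    ext a
    simp only [boundary, mem_filter, mem_erase, mem_powerset]
    constructor
    · rintro ⟨⟨hne, haG⟩, hax⟩
      exact ⟨hax, hG.1 a haG, hne⟩
    · rintro ⟨hax, ha, hne⟩
      exact ⟨⟨hne, hG.2 x hx a ha hax⟩, hax⟩
  rw [sum_coe_sort (G.erase x) (fun a => if a ⊆ x then f a else 0), ← sum_filter, hfilter]

def boundaryWeight (H : Finset (Finset α)) (x : Finset α) : H → ℝ :=
  fun a => if a.1 ⊆ x then -(omegaS x : ℝ) * omegaS a.1 else 0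

theorem boundaryWeight_vecMul_connL {G : Finset (Finset α)} (hG : IsComplex G) {x : Finset α}
    (hx : x ∈ G) (hfacet : ∀ z ∈ G, x ⊆ z → z = x) :
    boundaryWeight (G.erase x) x ᵥ* connL (G.erase x) = connVec (G.erase x) x := by
  ext ⟨z, hz⟩
  have hxz : ¬ (x.Nonempty ∧ x ⊆ z) := fun h =>
    (mem_erase.1 hz).1 (hfacet z (mem_of_mem_erase hz) h.2)
  have hω : (omegaS x : ℝ) * omegaS x = 1 := by exact_mod_cast omegaS_mul_self x
  simp only [vecMul, dotProduct, boundaryWeight, connL, connVec, ite_mul, zero_mul]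
  rw [sum_erase_ite_subset_eq_sum_boundary hG hx
    (fun a => -(omegaS x : ℝ) * omegaS a * if (a ∩ z).Nonempty then 1 else 0)]
  simp only [mul_assoc, ← mul_sum, sum_boundary_omegaS_mul_ite, if_neg hxz]
  split_ifs
  · linear_combination hω
  · ring

theorem boundaryWeight_dotProduct_connVec {G : Finset (Finset α)} (hG : IsComplex G)
    {x : Finset α} (hx : x ∈ G) :
    boundaryWeight (G.erase x) x ⬝ᵥ connVec (G.erase x) x = 1 - omegaS x := by
  have hω : (omegaS x : ℝ) * omegaS x = 1 := by exact_mod_cast omegaS_mul_self x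
  simp only [dotProduct, boundaryWeight, connVec, ite_mul, zero_mul, inter_comm x]
  rw [sum_erase_ite_subset_eq_sum_boundary hG hx
    (fun a => -(omegaS x : ℝ) * omegaS a * if (a ∩ x).Nonempty then 1 else 0)]
  simp only [mul_assoc, ← mul_sum, sum_boundary_omegaS_mul_ite, inter_self, hG.1 x hx,
    subset_refl, and_self, if_true]
  linear_combination hω

/-- Deformation determinant formula (multiplicative Poincaré–Hopf): for a facet
x of G with boundary complex A = { y : ∅ ≠ y ⊊ x } and H = G \ {x},
det(K(t)) = (1 - t²·χ(A))·det(L(H)); in particular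
det(K(1)) = ω(x)·det(L(H)). -/
theorem deformation_determinant (G : Finset (Finset α)) (hG : IsComplex G)
    (x : Finset α) (hx : x ∈ G) (hfacet : ∀ z ∈ G, x ⊆ z → z = x) :
    (∀ t : ℝ, (deformK G x t).det =
      (1 - t ^ 2 * (chi (x.powerset.filter (fun y => y.Nonempty ∧ y ≠ x)) : ℝ))
        * (connL (G.erase x)).det) ∧
    (deformK G x 1).det = (omegaS x : ℝ) * (connL (G.erase x)).det := by
  have hχ := chi_boundary (hG.1 x hx)
  have hdet : ∀ t : ℝ, (deformK G x t).det
      = (1 - t ^ 2 * (chi (boundary x) : ℝ)) * (connL (G.erase x)).det := by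
    intro t
    have hv : (t • boundaryWeight (G.erase x) x) ᵥ* connL (G.erase x)
        = t • connVec (G.erase x) x := by
      rw [smul_vecMul, boundaryWeight_vecMul_connL hG hx hfacet]
    rw [← det_submatrix_equiv_self (G.equivUnitSumErase hx).symm,
      deformK_submatrix_equivUnitSumErase hx, det_fromBlocks_replicate_of_vecMul_eq _ _ _ _ _ hv,
      smul_dotProduct, dotProduct_smul, boundaryWeight_dotProduct_connVec hG hx, hχ]
    simp only [smul_eq_mul, Int.cast_sub, Int.cast_one]
    ring
  refine ⟨hdet, ?_⟩
  rw [hdet, hχ]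
  push_cast
  ring
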